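/- arXiv:2309.11377 — 3 statements merged into one kernel-verified Lean document; each statement's English description precedes it below -/
import Mathlib

section
/- If f : ℝ^d → ℝ is m-strongly convex with L-Lipschitz gradient (0 < m ≤ L), then for any two points y_i, y_j with gradients u_i = ∇f(y_i), u_j = ∇f(y_j) and values f_i = f(y_i), f_j = f(y_j), the interpolation inequality holds: 2(L−m)(f_i − f_j) − mL‖y_i − y_j‖² + 2(y_i − y_j)ᵀ(m·u_i − L·u_j) − ‖u_i − u_j‖² ≥ 0. -/
open Set

section Aux

variable {E : Type*} [NormedAddCommGroup E] [InnerProductSpace ℝ E] [CompleteSpace E]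

private lemma line_hasDerivAt {f : E → ℝ} {G : E → E} (hd : ∀ x, HasGradientAt f (G x) x)
    (x v : E) (t : ℝ) :
    HasDerivAt (fun s : ℝ => f (x + s • v)) ((inner ℝ (G (x + t • v)) v : ℝ)) t := by
  have hline : HasDerivAt (fun s : ℝ => x + s • v) v t := by
    simpa using ((hasDerivAt_id t).smul_const v).const_add x
  have h2 := (hd (x + t • v)).hasFDerivAt.comp_hasDerivAt t hline
  simp only [InnerProductSpace.toDual_apply_apply] at h2
  exact h2

private lemma norm_add_smul_sq (x v : E) (t : ℝ) :
    ‖x + t • v‖ ^ 2 = ‖x‖ ^ 2 + 2 * t * (inner ℝ x v : ℝ) + t ^ 2 * ‖v‖ ^ 2 := by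
  rw [norm_add_sq_real, real_inner_smul_right, norm_smul, Real.norm_eq_abs, mul_pow, sq_abs]
  ring

/-- first order lower bound from strong convexity -/
private lemma strong_lower {f : E → ℝ} {g : E → E} {m : ℝ}
    (hg : ∀ x, HasGradientAt f (g x) x)
    (hsc : ConvexOn ℝ Set.univ (fun x => f x - m / 2 * ‖x‖ ^ 2)) (x y : E) :
    f x + (inner ℝ (g x) (y - x) : ℝ) + m / 2 * ‖y - x‖ ^ 2 ≤ f y := by
  set v := y - x with hv
  have hxy : x + v = y := by rw [hv]; abel
  -- convexity of the 1-dim restriction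
  have hconv : ConvexOn ℝ Set.univ (fun t : ℝ => f (x + t • v) - m / 2 * ‖x + t • v‖ ^ 2) := by
    have h2 := hsc.comp_affineMap (AffineMap.lineMap x y : ℝ →ᵃ[ℝ] E)
    simp only [Set.preimage_univ] at h2
    have hfun : (fun t : ℝ => f (x + t • v) - m / 2 * ‖x + t • v‖ ^ 2)
        = (fun x => f x - m / 2 * ‖x‖ ^ 2) ∘ (AffineMap.lineMap x y : ℝ →ᵃ[ℝ] E) := by
      funext t
      simp only [Function.comp_apply, AffineMap.lineMap_apply_module']
      rw [← hv, add_comm]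
    rw [hfun]
    exact h2
  -- derivative of the restriction
  have hφ : ∀ t : ℝ, HasDerivAt (fun s : ℝ => f (x + s • v) - m / 2 * ‖x + s • v‖ ^ 2)
      ((inner ℝ (g (x + t • v)) v : ℝ) - m * ((inner ℝ x v : ℝ) + t * ‖v‖ ^ 2)) t := by
    intro t
    have h1 := line_hasDerivAt hg x v t
    have h2 : HasDerivAt (fun s : ℝ => m / 2 * ‖x + s • v‖ ^ 2)
        (m * ((inner ℝ x v : ℝ) + t * ‖v‖ ^ 2)) t := by
      have h3 : (fun s : ℝ => m / 2 * ‖x + s • v‖ ^ 2)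
          = fun s : ℝ => m / 2 * (‖x‖ ^ 2 + 2 * s * (inner ℝ x v : ℝ) + s ^ 2 * ‖v‖ ^ 2) := by
        funext s; rw [norm_add_smul_sq]
      rw [h3]
      have h4 : HasDerivAt (fun s : ℝ => ‖x‖ ^ 2 + 2 * s * (inner ℝ x v : ℝ) + s ^ 2 * ‖v‖ ^ 2)
          (2 * (inner ℝ x v : ℝ) + 2 * t * ‖v‖ ^ 2) t := by
        have ha : HasDerivAt (fun s : ℝ => 2 * s * (inner ℝ x v : ℝ)) (2 * (inner ℝ x v : ℝ)) t := by
          simpa using (((hasDerivAt_id t).const_mul (2 : ℝ)).mul_const ((inner ℝ x v : ℝ)))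
        have hb : HasDerivAt (fun s : ℝ => s ^ 2 * ‖v‖ ^ 2) (2 * t * ‖v‖ ^ 2) t := by
          have := (hasDerivAt_pow 2 t).mul_const (‖v‖ ^ 2)
          exact this.congr_deriv (by ring)
        exact (ha.const_add (‖x‖ ^ 2)).add hb
      have h5 := h4.const_mul (m / 2)
      exact h5.congr_deriv (by ring)
    exact h1.sub h2
  have hslope := hconv.le_slope_of_hasDerivAt (Set.mem_univ (0 : ℝ)) (Set.mem_univ (1 : ℝ))
    zero_lt_one (hφ 0)
  rw [slope_def_field] at hslope
  simp only [zero_smul, add_zero, one_smul, zero_mul, mul_zero, sub_zero, div_one, hxy] at hslope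
  have hnorm : ‖y‖ ^ 2 = ‖x‖ ^ 2 + 2 * (inner ℝ x v : ℝ) + ‖v‖ ^ 2 := by
    have := norm_add_smul_sq x v 1
    simpa [hxy] using this
  rw [hnorm] at hslope
  linarith

/-- descent lemma from Lipschitz gradient -/
private lemma descent {f : E → ℝ} {g : E → E} {L : ℝ} (hL : 0 ≤ L)
    (hg : ∀ x, HasGradientAt f (g x) x)
    (hlip : ∀ x y, ‖g x - g y‖ ≤ L * ‖x - y‖) (x y : E) :
    f y ≤ f x + (inner ℝ (g x) (y - x) : ℝ) + L / 2 * ‖y - x‖ ^ 2 := by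
  set v := y - x with hv
  have hxy : x + v = y := by rw [hv]; abel
  set ψ : ℝ → ℝ := fun t => f (x + t • v) - t * (inner ℝ (g x) v : ℝ) - L / 2 * t ^ 2 * ‖v‖ ^ 2
    with hψ
  have hψd : ∀ t : ℝ, HasDerivAt ψ
      ((inner ℝ (g (x + t • v)) v : ℝ) - (inner ℝ (g x) v : ℝ) - L * t * ‖v‖ ^ 2) t := by
    intro t
    have h1 := line_hasDerivAt hg x v t
    have h2 : HasDerivAt (fun s : ℝ => s * (inner ℝ (g x) v : ℝ)) ((inner ℝ (g x) v : ℝ)) t := by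
      simpa using (hasDerivAt_id t).mul_const ((inner ℝ (g x) v : ℝ))
    have h3 : HasDerivAt (fun s : ℝ => L / 2 * s ^ 2 * ‖v‖ ^ 2) (L * t * ‖v‖ ^ 2) t := by
      have := ((hasDerivAt_pow 2 t).const_mul (L / 2)).mul_const (‖v‖ ^ 2)
      have he : (fun s : ℝ => L / 2 * s ^ 2 * ‖v‖ ^ 2) = fun s : ℝ => L / 2 * s ^ 2 * ‖v‖ ^ 2 := rfl
      exact this.congr_deriv (by ring)
    exact (h1.sub h2).sub h3
  have hanti : AntitoneOn ψ (Icc (0 : ℝ) 1) := by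
    apply antitoneOn_of_deriv_nonpos (convex_Icc 0 1)
    · exact fun t _ => ((hψd t).differentiableAt.continuousAt).continuousWithinAt
    · exact fun t _ => (hψd t).differentiableAt.differentiableWithinAt
    · intro t ht
      rw [interior_Icc] at ht
      rw [(hψd t).deriv]
      have h4 : (inner ℝ (g (x + t • v)) v : ℝ) - (inner ℝ (g x) v : ℝ)
          = (inner ℝ (g (x + t • v) - g x) v : ℝ) := (inner_sub_left _ _ _).symm
      have h5 : (inner ℝ (g (x + t • v) - g x) v : ℝ) ≤ L * t * ‖v‖ ^ 2 := by
        calc (inner ℝ (g (x + t • v) - g x) v : ℝ) ≤ ‖g (x + t • v) - g x‖ * ‖v‖ :=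
              real_inner_le_norm _ _
          _ ≤ (L * ‖(x + t • v) - x‖) * ‖v‖ :=
              mul_le_mul_of_nonneg_right (hlip _ _) (norm_nonneg _)
          _ = L * t * ‖v‖ ^ 2 := by
              have : (x + t • v) - x = t • v := by abel
              rw [this, norm_smul, Real.norm_eq_abs, abs_of_pos ht.1]
              ring
      linarith [h4 ▸ h5]
  have hps := hanti (Set.left_mem_Icc.2 zero_le_one) (Set.right_mem_Icc.2 zero_le_one) zero_le_one
  simp only [hψ, zero_smul, add_zero, one_smul, zero_mul, mul_zero, sub_zero, zero_pow,
    one_pow, mul_one, hxy] at hps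
  linarith

end Aux

/-- Interpolation inequality for smooth strongly convex functions
(Taylor–Hendrickx–Glineur, necessity direction). -/
theorem interpolation_inequality (d : ℕ) (m L : ℝ) (hm : 0 < m) (hmL : m ≤ L)
    (f : EuclideanSpace ℝ (Fin d) → ℝ) (g : EuclideanSpace ℝ (Fin d) → EuclideanSpace ℝ (Fin d))
    (hg : ∀ x, HasGradientAt f (g x) x)
    (hsc : ConvexOn ℝ Set.univ (fun x => f x - m / 2 * ‖x‖ ^ 2))
    (hlip : ∀ x y, ‖g x - g y‖ ≤ L * ‖x - y‖) :
    ∀ yi yj : EuclideanSpace ℝ (Fin d),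
      2 * (L - m) * (f yi - f yj) - m * L * ‖yi - yj‖ ^ 2
        + 2 * (inner ℝ (yi - yj) (m • g yi - L • g yj) : ℝ)
        - ‖g yi - g yj‖ ^ 2 ≥ 0 := by
  intro yi yj
  have hL : (0 : ℝ) ≤ L := le_trans hm.le hmL
  set w : EuclideanSpace ℝ (Fin d) := (g yi - g yj) - m • (yi - yj) with hw
  set c : ℝ := f yj - f yi + (inner ℝ (g yj) (yi - yj) : ℝ) + m / 2 * ‖yi - yj‖ ^ 2 with hcdef
  -- the key one-parameter family of inequalities
  have hC : ∀ t : ℝ, c ≤ -t * ‖w‖ ^ 2 + (L - m) / 2 * t ^ 2 * ‖w‖ ^ 2 := by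
    intro t
    have h1 := strong_lower hg hsc yj (yi - t • w)
    have h2 := descent hL hg hlip yi (yi - t • w)
    have e1 : (yi - t • w) - yj = (yi - yj) + t • (-w) := by
      rw [smul_neg]; abel
    have e2 : (yi - t • w) - yi = t • (-w) := by
      rw [smul_neg]; abel
    have e3 : ‖t • (-w)‖ ^ 2 = t ^ 2 * ‖w‖ ^ 2 := by
      rw [norm_smul, Real.norm_eq_abs, norm_neg, mul_pow, sq_abs]
    simp only [e1, norm_add_smul_sq, inner_add_right, real_inner_smul_right, inner_neg_right,
      norm_neg] at h1
    simp only [e2, e3, real_inner_smul_right, inner_neg_right] at h2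
    have hkey : (inner ℝ (g yi) w : ℝ) - (inner ℝ (g yj) w : ℝ) - m * (inner ℝ (yi - yj) w : ℝ)
        = ‖w‖ ^ 2 := by
      have h6 : (inner ℝ ((g yi - g yj) - m • (yi - yj)) w : ℝ) = ‖w‖ ^ 2 := by
        rw [← hw, real_inner_self_eq_norm_sq]
      rw [inner_sub_left, inner_sub_left, real_inner_smul_left] at h6
      exact h6
    have hchain := h1.trans h2
    have hne : c - (-t * ‖w‖ ^ 2 + (L - m) / 2 * t ^ 2 * ‖w‖ ^ 2)
        = (f yj + ((inner ℝ (g yj) (yi - yj) : ℝ) - t * (inner ℝ (g yj) w : ℝ))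
            + m / 2 * (‖yi - yj‖ ^ 2 - 2 * t * (inner ℝ (yi - yj) w : ℝ) + t ^ 2 * ‖w‖ ^ 2))
          - (f yi - t * (inner ℝ (g yi) w : ℝ) + L / 2 * (t ^ 2 * ‖w‖ ^ 2)) := by
      rw [hcdef]
      linear_combination (-t) * hkey
    linarith [hchain, hne]
  -- obtain the combined inequality 2(L-m)c + ‖w‖² ≤ 0
  have hineq : 2 * (L - m) * c + ‖w‖ ^ 2 ≤ 0 := by
    rcases eq_or_lt_of_le hmL with heq | hlt
    · -- m = L : show w = 0
      have hW : ‖w‖ ^ 2 ≤ 0 := by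
        by_contra hpos
        push_neg at hpos
        have h := hC ((1 - c) / ‖w‖ ^ 2)
        rw [← heq] at h
        have : -((1 - c) / ‖w‖ ^ 2) * ‖w‖ ^ 2 = -(1 - c) := by
          rw [neg_mul, div_mul_cancel₀ _ hpos.ne']
        rw [this] at h
        simp at h
        linarith
      rw [← heq]
      simp only [sub_self, mul_zero, zero_mul, zero_add]
      linarith
    · have hpos : 0 < L - m := sub_pos.2 hlt
      have h := hC (1 / (L - m))
      have he : -(1 / (L - m)) * ‖w‖ ^ 2 + (L - m) / 2 * (1 / (L - m)) ^ 2 * ‖w‖ ^ 2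
          = -(‖w‖ ^ 2) / (2 * (L - m)) := by
        field_simp
        ring
      rw [he] at h
      have h2 : c * (2 * (L - m)) ≤ (-(‖w‖ ^ 2) / (2 * (L - m))) * (2 * (L - m)) :=
        mul_le_mul_of_nonneg_right h (by positivity)
      rw [div_mul_cancel₀] at h2
      · linarith
      · positivity
  -- expand the goal and conclude
  have hw2 : ‖w‖ ^ 2 = ‖g yi - g yj‖ ^ 2
      - 2 * m * ((inner ℝ (yi - yj) (g yi) : ℝ) - (inner ℝ (yi - yj) (g yj) : ℝ))
      + m ^ 2 * ‖yi - yj‖ ^ 2 := by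
    rw [hw, norm_sub_sq_real, real_inner_smul_right, norm_smul, Real.norm_eq_abs, mul_pow, sq_abs]
    have : (inner ℝ (g yi - g yj) (yi - yj) : ℝ)
        = (inner ℝ (yi - yj) (g yi) : ℝ) - (inner ℝ (yi - yj) (g yj) : ℝ) := by
      rw [real_inner_comm, inner_sub_right]
    rw [this]
    ring
  have hcomm : (inner ℝ (g yj) (yi - yj) : ℝ) = (inner ℝ (yi - yj) (g yj) : ℝ) := real_inner_comm _ _
  rw [hcomm] at hcdef
  have hgoal : 2 * (inner ℝ (yi - yj) (m • g yi - L • g yj) : ℝ)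
      = 2 * (m * (inner ℝ (yi - yj) (g yi) : ℝ) - L * (inner ℝ (yi - yj) (g yj) : ℝ)) := by
    rw [inner_sub_right, real_inner_smul_right, real_inner_smul_right]
  rw [ge_iff_le, ← sub_nonneg, sub_zero, hgoal]
  rw [hcdef] at hineq
  linarith [hineq, hw2]
end

section
/- Let A be a 2×2 real matrix A = [[1+β−αλ, −β],[1, 0]] with 0 < m ≤ λ ≤ L, α = 4/(√L+√m)², β = ((√κ−1)/(√κ+1))² where κ = L/m. Then the spectral radius of A is at most (√κ−1)/(√κ+1). -/
open Matrix

lemma quad_root_bound (t b : ℝ) (hb : 0 ≤ b) (ht : t^2 ≤ 4*b) (μ : ℂ)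
    (h : μ^2 - (t:ℂ)*μ + (b:ℂ) = 0) : ‖μ‖ ≤ Real.sqrt b := by
  have hre : μ.re^2 - μ.im^2 - t*μ.re + b = 0 := by
    have := congrArg Complex.re h; simpa [Complex.ext_iff, pow_two, Complex.mul_re,
      Complex.mul_im] using this
  have him : 2*μ.re*μ.im - t*μ.im = 0 := by
    have := congrArg Complex.im h; simp [pow_two, Complex.mul_re, Complex.mul_im] at this
    linarith
  have hsq : μ.re^2 + μ.im^2 ≤ b := by
    rcases eq_or_ne μ.im 0 with h0 | h0
    · rw [h0] at hre ⊢
      nlinarith [sq_nonneg (μ.re - t/2)]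
    · have hx : μ.re = t/2 := by
        have : μ.im * (2*μ.re - t) = 0 := by linarith [him]; 
        rcases mul_eq_zero.mp this with h | h
        · exact absurd h h0
        · linarith
      rw [hx] at hre ⊢; nlinarith [hre]
  have habs : (‖μ‖)^2 = μ.re^2 + μ.im^2 := by
    rw [Complex.sq_norm, Complex.normSq_apply]; ring
  have h1 : (‖μ‖)^2 ≤ b := habs ▸ hsq
  have := Real.sqrt_le_sqrt h1
  rwa [Real.sqrt_sq (norm_nonneg μ)] at this

/-- The Heavy Ball companion matrix with optimal tuning has spectral radius
at most (√κ - 1)/(√κ + 1), for any Hessian eigenvalue λ ∈ [m, L]. -/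
theorem heavy_ball_spectral_radius (m L lam : ℝ) (hm : 0 < m) (hmL : m ≤ L)
    (hlam₁ : m ≤ lam) (hlam₂ : lam ≤ L)
    (α β : ℝ) (hα : α = 4 / (Real.sqrt L + Real.sqrt m) ^ 2)
    (hβ : β = ((Real.sqrt (L / m) - 1) / (Real.sqrt (L / m) + 1)) ^ 2)
    (A : Matrix (Fin 2) (Fin 2) ℝ)
    (hA : A = !![1 + β - α * lam, -β; 1, 0]) :
    ∀ μ ∈ spectrum ℂ (A.map (Complex.ofReal)),
      ‖μ‖ ≤ (Real.sqrt (L / m) - 1) / (Real.sqrt (L / m) + 1) := by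
  intro μ hμ
  set r := Real.sqrt m with hr
  set s := Real.sqrt L with hs
  have hr0 : 0 < r := Real.sqrt_pos.mpr hm
  have hs0 : 0 < s := Real.sqrt_pos.mpr (hm.trans_le hmL)
  have hrs : r ≤ s := Real.sqrt_le_sqrt hmL
  have hr2 : r ^ 2 = m := Real.sq_sqrt hm.le
  have hs2 : s ^ 2 = L := Real.sq_sqrt (hm.le.trans hmL)
  have hdiv : Real.sqrt (L / m) = s / r := Real.sqrt_div (hm.le.trans hmL) m
  have hq : (Real.sqrt (L / m) - 1) / (Real.sqrt (L / m) + 1) = (s - r) / (s + r) := by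
    rw [hdiv]
    rw [div_sub_one hr0.ne', div_add_one hr0.ne', div_div_div_eq, mul_comm,
      mul_div_mul_left _ _ hr0.ne']
  have hq0 : 0 ≤ (s - r) / (s + r) := div_nonneg (by linarith) (by linarith)
  have hβ' : β = ((s - r) / (s + r)) ^ 2 := by rw [hβ, hq]
  have hβ0 : 0 ≤ β := by rw [hβ']; positivity
  -- the trace entry
  set t : ℝ := 1 + β - α * lam with htdef
  have ht : t = (2 * L + 2 * m - 4 * lam) / (s + r) ^ 2 := by
    rw [htdef, hα, hβ', ← hr2, ← hs2]
    field_simp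
    ring
  have h4b : 4 * β = 4 * (L - m) ^ 2 / ((s + r) ^ 2) ^ 2 := by
    rw [hβ', ← hr2, ← hs2]
    field_simp
    ring
  have key : (2 * L + 2 * m - 4 * lam) ^ 2 ≤ 4 * (L - m) ^ 2 := by
    nlinarith [mul_nonneg (sub_nonneg.2 hlam₁) (sub_nonneg.2 hlam₂)]
  have ht2 : t ^ 2 ≤ 4 * β := by
    rw [ht, h4b, div_pow]
    gcongr
  -- extract the characteristic equation
  rw [spectrum.mem_iff] at hμ
  have hdet : ((algebraMap ℂ (Matrix (Fin 2) (Fin 2) ℂ)) μ - A.map Complex.ofReal).det = 0 := by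
    by_contra h
    exact hμ ((Matrix.isUnit_iff_isUnit_det _).mpr (isUnit_iff_ne_zero.mpr h))
  subst hA
  rw [Matrix.det_fin_two] at hdet
  simp [Matrix.map_apply, Matrix.algebraMap_matrix_apply] at hdet
  have heq : μ ^ 2 - (t : ℂ) * μ + (β : ℂ) = 0 := by
    linear_combination hdet
  have := quad_root_bound t β hβ0 ht2 μ heq
  rw [hq]
  have hsqrt : Real.sqrt β = (s - r) / (s + r) := by
    rw [hβ', Real.sqrt_sq hq0]
  rwa [hsqrt] at this
end

section
/- For κ ≥ 1, √(1 − 1/√κ) ≥ (√(3κ+1) − 2)/√(3κ+1); i.e., the estimating-sequences rate bound for Fast Gradient on smooth strongly convex functions is never better than the optimal Fast Gradient rate on quadratics. -/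
/-- For κ ≥ 1, the estimating-sequences rate bound for FG is never better than
the optimal quadratic FG rate: √(1 - 1/√κ) ≥ (√(3κ+1) - 2)/√(3κ+1). -/
theorem estimating_sequences_rate_ge_quadratic_fg_rate (κ : ℝ) (hκ : 1 ≤ κ) :
    Real.sqrt (1 - 1 / Real.sqrt κ)
      ≥ (Real.sqrt (3 * κ + 1) - 2) / Real.sqrt (3 * κ + 1) := by
  set s := Real.sqrt κ with hs
  set t := Real.sqrt (3 * κ + 1) with ht
  have hs1 : 1 ≤ s := by
    rw [hs, show (1:ℝ) = Real.sqrt 1 by simp]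
    exact Real.sqrt_le_sqrt hκ
  have hs2 : s ^ 2 = κ := Real.sq_sqrt (by linarith)
  have ht2 : 2 ≤ t := by
    rw [ht, show (2:ℝ) = Real.sqrt 4 by
      rw [show (4:ℝ) = 2^2 by norm_num, Real.sqrt_sq (by norm_num)]]
    exact Real.sqrt_le_sqrt (by linarith)
  have ht2' : t ^ 2 = 3 * κ + 1 := Real.sq_sqrt (by linarith)
  have hspos : 0 < s := by linarith
  have htpos : 0 < t := by linarith
  have hrhs : 0 ≤ (t - 2) / t := div_nonneg (by linarith) (by linarith)
  have hnn : 0 ≤ 1 - 1 / s := by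
    rw [sub_nonneg]
    exact (div_le_one hspos).mpr hs1
  rw [ge_iff_le, Real.le_sqrt hrhs, div_pow, div_le_iff₀ (by positivity)]
  -- need: (t-2)^2 ≤ (1 - 1/s) * t^2, i.e. s*(t-2)^2 ≤ (s-1)*t^2
  rw [one_sub_div hspos.ne']
  rw [div_mul_eq_mul_div, le_div_iff₀ hspos]
  -- (t-2)^2 * s ≤ (s-1)*t^2  ⟺  4s + t² ≤ 4st  ⟺ 3s²+4s+1 ≤ 4st
  have key : 3 * s ^ 2 + 4 * s + 1 ≤ 4 * s * t := by
    nlinarith [sq_nonneg (4 * s * t - (3 * s ^ 2 + 4 * s + 1)), sq_nonneg (s - 1),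
      mul_pos hspos htpos, sq_nonneg (s*t), mul_nonneg (mul_nonneg hspos.le hspos.le)
      (sub_nonneg.mpr hs1)]
  nlinarith [key]
  exact hnn
end
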